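/- A standard permutation π of {±1,...,±n} is sign-disconnected if and only if there exists i with 1 ≤ i < n such that |π(j)| ≤ i for all j ≤ 2i. -/
import Mathlib


/-- A sequence `π` lists each element of `{±1, …, ±n}` exactly once among
positions `0, …, 2n-1`. -/
def IsSgnPerm (n : ℕ) (π : ℕ → ℤ) : Prop :=
  (Finset.range (2*n)).image π = (Finset.Icc (-(n:ℤ)) (n:ℤ)).erase 0

/-- A standard permutation of `{±1, …, ±n}`: each `i` appears before `-i`, and
the negative entries appear in the order `-1, -2, …, -n`. -/
def IsStdPerm (n : ℕ) (π : ℕ → ℤ) : Prop :=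
  IsSgnPerm n π ∧
  (∀ k l, k < 2*n → l < 2*n → 0 < π k → π l = -π k → k < l) ∧
  (∀ k l, k < 2*n → l < 2*n → π k < 0 → π l < 0 → (k < l ↔ π l < π k))

/-- Sign-connectedness: every proper nonempty initial segment contains exactly
one element of some pair `{j, -j}`. -/
def SignConnected (n : ℕ) (π : ℕ → ℤ) : Prop :=
  ∀ m, 1 ≤ m → m < 2*n → ∃ j : ℤ, 1 ≤ j ∧ j ≤ n ∧
    Xor' (∃ i < m, π i = j) (∃ i < m, π i = -j)

/-- A standard permutation is sign-disconnected iff there is an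
`i` with `1 ≤ i < n` such that `|π j| ≤ i` for the first `2i` entries. -/
theorem stmt_3 (n : ℕ) (π : ℕ → ℤ) (hπ : IsStdPerm n π) :
    ¬ SignConnected n π ↔ ∃ i, 1 ≤ i ∧ i < n ∧ ∀ j < 2*i, |π j| ≤ (i : ℤ) := by
  classical
  obtain ⟨hfull, hpos, hneg⟩ := hπ
  have h0mem : (0:ℤ) ∈ Finset.Icc (-(n:ℤ)) (n:ℤ) := by
    simp
  have hcard_full : ((Finset.Icc (-(n:ℤ)) (n:ℤ)).erase 0).card = 2*n := by
    rw [Finset.card_erase_of_mem h0mem, Int.card_Icc]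
    omega
  have hinj : Set.InjOn π (Finset.range (2*n)) := by
    apply Finset.injOn_of_card_image_eq
    rw [hfull, hcard_full, Finset.card_range]
  have hmemfull : ∀ k, k < 2*n → π k ∈ (Finset.Icc (-(n:ℤ)) (n:ℤ)).erase 0 := by
    intro k hk
    rw [← hfull]
    exact Finset.mem_image_of_mem π (Finset.mem_range.mpr hk)
  have hbounds : ∀ k, k < 2*n → π k ≠ 0 ∧ -(n:ℤ) ≤ π k ∧ π k ≤ n := by
    intro k hk
    have := hmemfull k hk
    simp only [Finset.mem_erase, Finset.mem_Icc] at this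
    tauto
  have hsurj : ∀ x : ℤ, x ≠ 0 → -(n:ℤ) ≤ x → x ≤ n → ∃ k, k < 2*n ∧ π k = x := by
    intro x hx0 hxl hxr
    have : x ∈ (Finset.range (2*n)).image π := by
      rw [hfull]
      simp only [Finset.mem_erase, Finset.mem_Icc]
      exact ⟨hx0, hxl, hxr⟩
    obtain ⟨k, hk, hkx⟩ := Finset.mem_image.mp this
    exact ⟨k, Finset.mem_range.mp hk, hkx⟩
  constructor
  · intro hnc
    rw [SignConnected] at hnc
    push_neg at hnc
    obtain ⟨m, hm1, hm2n, hxor⟩ := hnc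
    set S := (Finset.range m).image π with hS
    have hScard : S.card = m := by
      rw [hS, Finset.card_image_of_injOn (hinj.mono (by
        intro x hx
        simp only [Finset.coe_range, Set.mem_Iio] at hx ⊢
        omega)), Finset.card_range]
    have hSmem : ∀ x : ℤ, x ∈ S ↔ ∃ k < m, π k = x := by
      intro x
      simp [hS, Finset.mem_image, Finset.mem_range]
    have hclosed : ∀ x ∈ S, -x ∈ S := by
      intro x hx
      obtain ⟨k, hkm, hkx⟩ := (hSmem x).mp hx
      have hk2n : k < 2*n := lt_trans hkm hm2n
      obtain ⟨hne, hl, hr⟩ := hbounds k hk2n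
      rw [hkx] at hne hl hr
      by_contra hnx
      have hA : ¬ ∃ l < m, π l = -x := by
        rintro ⟨l, hlm, hlx⟩
        exact hnx ((hSmem (-x)).mpr ⟨l, hlm, hlx⟩)
      rcases lt_or_gt_of_ne hne with hlt | hgt
      · have h := hxor (-x) (by omega) (by omega)
        rw [Xor'] at h
        exact h (Or.inr ⟨⟨k, hkm, by rw [hkx]; ring⟩, hA⟩)
      · have h := hxor x (by omega) (by omega)
        rw [Xor'] at h
        exact h (Or.inl ⟨⟨k, hkm, hkx⟩, hA⟩)
    set negs := S.filter (fun x => x < 0) with hnegs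
    set i := negs.card with hi
    have hSne : ∀ x ∈ S, x ≠ 0 := by
      intro x hx
      obtain ⟨k, hkm, hkx⟩ := (hSmem x).mp hx
      rw [← hkx]
      exact (hbounds k (lt_trans hkm hm2n)).1
    have hposs : S.filter (fun x => ¬ x < 0) = negs.image (fun x => -x) := by
      apply Finset.ext
      intro y
      simp only [Finset.mem_filter, Finset.mem_image, hnegs]
      constructor
      · rintro ⟨hyS, hy⟩
        have hy0 := hSne y hyS
        exact ⟨-y, ⟨hclosed y hyS, by omega⟩, by ring⟩
      · rintro ⟨x, ⟨hxS, hxlt⟩, rfl⟩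
        exact ⟨hclosed x hxS, by omega⟩
    have hm2i : m = 2*i := by
      have h1 := Finset.card_filter_add_card_filter_not
        (s := S) (p := fun x => x < 0)
      have h2 : (S.filter (fun x => ¬ x < 0)).card = i := by
        rw [hposs, Finset.card_image_of_injOn (fun a _ b _ hab => by omega)]
      rw [h2, hScard, ← hnegs] at h1
      omega
    have hdc : ∀ x ∈ negs, ∀ y : ℤ, x ≤ y → y < 0 → y ∈ negs := by
      intro x hx y hxy hy0
      rw [hnegs] at hx
      obtain ⟨hxS, hxlt⟩ := Finset.mem_filter.mp hx
      obtain ⟨k, hkm, hkx⟩ := (hSmem x).mp hxS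
      have hk2n : k < 2*n := lt_trans hkm hm2n
      obtain ⟨_, hxl, _⟩ := hbounds k hk2n
      obtain ⟨l, hl2n, hly⟩ := hsurj y (by omega) (by rw [hkx] at hxl; omega)
        (by have : (0:ℤ) ≤ n := Int.ofNat_nonneg n; omega)
      have hiff := hneg k l hk2n hl2n (by omega) (by omega)
      have hnkl : ¬ k < l := by
        rw [hiff, hly, hkx]
        omega
      rw [hnegs]
      refine Finset.mem_filter.mpr ⟨(hSmem y).mpr ⟨l, by omega, hly⟩, hy0⟩
    have hsub : Finset.Icc (-(i:ℤ)) (-1) ⊆ negs := by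
      intro y hy
      rw [Finset.mem_Icc] at hy
      by_contra hyn
      have hns : negs ⊆ Finset.Icc (y+1) (-1) := by
        intro x hx
        rw [Finset.mem_Icc]
        have hxlt := (Finset.mem_filter.mp (hnegs ▸ hx)).2
        constructor
        · by_contra hxy
          exact hyn (hdc x hx y (by omega) (by omega))
        · omega
      have hcle := Finset.card_le_card hns
      rw [Int.card_Icc] at hcle
      omega
    have hIcccard : (Finset.Icc (-(i:ℤ)) (-1)).card = i := by
      rw [Int.card_Icc]
      omega
    have hneq : Finset.Icc (-(i:ℤ)) (-1) = negs :=
      Finset.eq_of_subset_of_card_le hsub (by omega)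
    refine ⟨i, by omega, by omega, ?_⟩
    intro j hj
    have hjm : j < m := by omega
    have hjS : π j ∈ S := (hSmem (π j)).mpr ⟨j, hjm, rfl⟩
    have hne0 := hSne (π j) hjS
    rcases lt_or_gt_of_ne hne0 with hlt | hgt
    · have : π j ∈ negs := by
        rw [hnegs]; exact Finset.mem_filter.mpr ⟨hjS, hlt⟩
      rw [← hneq, Finset.mem_Icc] at this
      rw [abs_le]
      omega
    · have : -(π j) ∈ negs := by
        rw [hnegs]; exact Finset.mem_filter.mpr ⟨hclosed _ hjS, by omega⟩
      rw [← hneq, Finset.mem_Icc] at this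
      rw [abs_le]
      omega
  · rintro ⟨i, hi1, hin, hbd⟩ hSC
    obtain ⟨j, hj1, hjn, hxor⟩ := hSC (2*i) (by omega) (by omega)
    have hsub : (Finset.range (2*i)).image π ⊆ (Finset.Icc (-(i:ℤ)) (i:ℤ)).erase 0 := by
      intro x hx
      obtain ⟨k, hk, rfl⟩ := Finset.mem_image.mp hx
      have hk' := Finset.mem_range.mp hk
      have h1 := hbd k hk'
      have h2 := (hbounds k (by omega)).1
      rw [abs_le] at h1
      simp only [Finset.mem_erase, Finset.mem_Icc]
      exact ⟨h2, h1⟩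
    have hcard1 : ((Finset.range (2*i)).image π).card = 2*i := by
      rw [Finset.card_image_of_injOn (hinj.mono (by
        intro x hx
        simp only [Finset.coe_range, Set.mem_Iio] at hx ⊢
        omega)), Finset.card_range]
    have hcard2 : ((Finset.Icc (-(i:ℤ)) (i:ℤ)).erase 0).card = 2*i := by
      rw [Finset.card_erase_of_mem (by simp), Int.card_Icc]
      omega
    have heq : (Finset.range (2*i)).image π = (Finset.Icc (-(i:ℤ)) (i:ℤ)).erase 0 :=
      Finset.eq_of_subset_of_card_le hsub (by omega)
    have hmem' : ∀ x : ℤ, (∃ k < 2*i, π k = x) ↔ (x ≠ 0 ∧ -(i:ℤ) ≤ x ∧ x ≤ i) := by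
      intro x
      constructor
      · rintro ⟨k, hk, rfl⟩
        have : π k ∈ (Finset.Icc (-(i:ℤ)) (i:ℤ)).erase 0 := by
          rw [← heq]
          exact Finset.mem_image_of_mem π (Finset.mem_range.mpr hk)
        simp only [Finset.mem_erase, Finset.mem_Icc] at this
        tauto
      · rintro ⟨hx0, hxl, hxr⟩
        have : x ∈ (Finset.range (2*i)).image π := by
          rw [heq]
          simp only [Finset.mem_erase, Finset.mem_Icc]
          exact ⟨hx0, hxl, hxr⟩
        obtain ⟨k, hk, hkx⟩ := Finset.mem_image.mp this
        exact ⟨k, Finset.mem_range.mp hk, hkx⟩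
    rcases hxor with ⟨hA, hB⟩ | ⟨hB, hA⟩
    · obtain ⟨h0, hl, hr⟩ := (hmem' j).mp hA
      exact hB ((hmem' (-j)).mpr ⟨by omega, by omega, by omega⟩)
    · obtain ⟨h0, hl, hr⟩ := (hmem' (-j)).mp hB
      exact hA ((hmem' j).mpr ⟨by omega, by omega, by omega⟩)
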